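/- There exists h_c ∈ (1/2,3/4) such that for all h ∈ (1/2,h_c) one has Σ_{k=1}^∞ ρ_h(k)² < 1/4, and for all h ∈ (h_c,3/4) one has Σ_{k=1}^∞ ρ_h(k)² > 1/4. -/

import Mathlib

open MeasureTheory Filter Set ProbabilityTheory

noncomputable section

/-- The normalizing constant `c_H`. -/
def cH (H : ℝ) : ℝ :=
  Real.sqrt (2 * H * Real.Gamma (3 / 2 - H) / (Real.Gamma (H + 1 / 2) * Real.Gamma (2 - 2 * H)))

/-- The constant `C_H = c_H (H - 1/2)`. -/
def CH (H : ℝ) : ℝ := cH H * (H - 1 / 2)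

/-- The kernel `k_H(t,s)`. -/
def kerH (H t s : ℝ) : ℝ :=
  CH H * s ^ (1 / 2 - H) * ∫ u in s..t, u ^ (H - 1 / 2) * (u - s) ^ (H - 3 / 2)

/-- The coefficient `J_n^{(N,H)}(i)` (with volatility `σ`). -/
def JN (σ H : ℝ) (N n i : ℕ) : ℝ :=
  σ * Real.sqrt N * ∫ u in (((i : ℝ) - 1) / N)..((i : ℝ) / N),
    (kerH H ((n : ℝ) / N) u - kerH H (((n : ℝ) - 1) / N) u)

/-- The coefficient `g_n^{(N,H)}` (with volatility `σ`). -/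
def gNH (σ H : ℝ) (N n : ℕ) : ℝ :=
  σ * Real.sqrt N * ∫ u in (((n : ℝ) - 1) / N)..((n : ℝ) / N), kerH H ((n : ℝ) / N) u

/-- The rescaled coefficient `j_n^H(i)`. -/
def jH (σ H : ℝ) (n i : ℕ) : ℝ :=
  σ * CH H * ∫ x in ((i : ℝ) - 1)..(i : ℝ),
    x ^ (1 / 2 - H) *
      ∫ v in (0 : ℝ)..1, (v + n - 1) ^ (H - 1 / 2) * (v + n - 1 - x) ^ (H - 3 / 2)

/-- The rescaled coefficient `g_n^H`. -/
def gnH (σ H : ℝ) (n : ℕ) : ℝ :=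
  σ * CH H * ∫ x in ((n : ℝ) - 1)..(n : ℝ),
    x ^ (1 / 2 - H) * ((n : ℝ) - x) ^ (H - 1 / 2) *
      ∫ y in (0 : ℝ)..1, (y * ((n : ℝ) - x) + x) ^ (H - 1 / 2) * y ^ (H - 3 / 2)

/-- The constant `g_H = σ c_H / (H + 1/2)`. -/
def gH (σ H : ℝ) : ℝ := σ * cH H / (H + 1 / 2)

/-- The autocovariance `ρ_h(k)` of fBm with Hurst parameter `h`. -/
def rho (h : ℝ) (k : ℕ) : ℝ :=
  (((k : ℝ) + 1) ^ (2 * h) + ((k : ℝ) - 1) ^ (2 * h) - 2 * (k : ℝ) ^ (2 * h)) / 2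

/-- The function `φ_n^H(x) = (n-x)^{H-1/2} - (n-1-x)^{H-1/2}`. -/
def phiH (H : ℝ) (n : ℕ) (x : ℝ) : ℝ :=
  ((n : ℝ) - x) ^ (H - 1 / 2) - ((n : ℝ) - 1 - x) ^ (H - 1 / 2)

/-- The quantity `I_n(i)`. -/
def InH (H : ℝ) (n i : ℕ) : ℝ :=
  ∫ x in ((i : ℝ) - 1)..(i : ℝ), x ^ (1 / 2 - H) * phiH H n x

/-- The function `g_n(x) = x^{1/2-H} φ_n^H(x)`. -/
def gmap (H : ℝ) (n : ℕ) (x : ℝ) : ℝ := x ^ (1 / 2 - H) * phiH H n x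

/-- A point of the binary tree (encoded by the booleans `x 0, …, x (n-2)`, where `true ↦ 1` and
`false ↦ -1`) is an arbitrage point at level `n` of the `N`-period fractional binary market if
`|Y_n^{(N,H)}(x) + a_n^{(N)}| ≥ g_n^{(N,H)}`. -/
def isArb (σ H : ℝ) (a : ℝ → ℝ) (N n : ℕ) (x : ℕ → Bool) : Prop :=
  gNH σ H N n ≤
    |(∑ i ∈ Finset.range (n - 1), JN σ H N n (i + 1) * (if x i then (1 : ℝ) else -1)) +
      a ((n : ℝ) / N) / N|

/-- The cardinality `|𝒜_n^{(N,H)}|` of the set of arbitrage points at level `n`. -/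
def arbCard (σ H : ℝ) (a : ℝ → ℝ) (N n : ℕ) : ℕ :=
  {x : Fin (n - 1) → Bool |
    isArb σ H a N n (fun i => if h : i < n - 1 then x ⟨i, h⟩ else false)}.ncard

/-- The cardinality `|𝒜_𝒫^{(N,H)}|` of the set of arbitrage paths. -/
def arbPathCard (σ H : ℝ) (a : ℝ → ℝ) (N : ℕ) : ℕ :=
  {x : Fin (N - 1) → Bool | ∃ n, 1 ≤ n ∧ n ≤ N ∧
    isArb σ H a N n (fun i => if h : i < N - 1 then x ⟨i, h⟩ else false)}.ncard

/-!
Writing `ρ_h(k+1) = h ∫_k^{k+1} ((x+1)^{2h-1} - x^{2h-1}) dx`, the integrand is nonnegative and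
nondecreasing in `h`; moreover `ρ_h(1) = 2^{2h-1} - 1` is strictly increasing. Hence
`S(h) = ∑_k ρ_h(k)²` is strictly increasing on `(1/2, 3/4)`. Bernoulli's inequality bounds the
integrand by `(2h-1) x^{2h-2}`, so `ρ_h(k+2) ≤ h(2h-1)(k+1)^{2h-2}`; together with
`∑_n (n+1)^{-s} ≤ s/(s-1)` this gives `S(3/5) < 1/4`, while the first three terms alone give
`S(37/50) > 1/4`. The threshold `h_c` is the supremum of `{h | S(h) < 1/4}`.
-/

theorem StrictMonoOn.exists_threshold {α β : Type*} [ConditionallyCompleteLinearOrder α]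
    [DenselyOrdered α] [LinearOrder β] {f : α → β} {a b x₀ x₁ : α} {c : β}
    (hf : StrictMonoOn f (Ioo a b)) (hx₀ : x₀ ∈ Ioo a b) (hx₁ : x₁ ∈ Ioo a b)
    (h₀ : f x₀ < c) (h₁ : c < f x₁) :
    ∃ t ∈ Ioo a b, (∀ x ∈ Ioo a t, f x < c) ∧ ∀ x ∈ Ioo t b, c < f x := by
  set A := {x | x ∈ Ioo a b ∧ f x < c}
  have hx₀A : x₀ ∈ A := ⟨hx₀, h₀⟩
  have hA_le : ∀ x ∈ A, x ≤ x₁ := fun x hx =>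
    le_of_not_gt fun hlt => (h₁.trans (hf hx₁ hx.1 hlt)).not_gt hx.2
  have hbdd : BddAbove A := ⟨x₁, hA_le⟩
  have hx₀_le : x₀ ≤ sSup A := le_csSup hbdd hx₀A
  refine ⟨sSup A, ⟨hx₀.1.trans_le hx₀_le, (csSup_le ⟨x₀, hx₀A⟩ hA_le).trans_lt hx₁.2⟩, ?_, ?_⟩
  · intro x hx
    obtain ⟨y, hyA, hxy⟩ := exists_lt_of_lt_csSup ⟨x₀, hx₀A⟩ hx.2
    exact (hf ⟨hx.1, hxy.trans hyA.1.2⟩ hyA.1 hxy).trans hyA.2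
  · intro x hx
    obtain ⟨m, hm, hmx⟩ := exists_between hx.1
    have hmI : m ∈ Ioo a b := ⟨hx₀.1.trans_le (hx₀_le.trans hm.le), hmx.trans hx.2⟩
    have hcm : c ≤ f m := le_of_not_gt fun hlt => (le_csSup hbdd ⟨hmI, hlt⟩).not_gt hm
    exact hcm.trans_lt (hf hmI ⟨hmI.1.trans hmx, hx.2⟩ hmx)

namespace Real

theorem rpow_add_one_sub_rpow_le {x p : ℝ} (hx : 0 < x) (hp₀ : 0 ≤ p) (hp₁ : p ≤ 1) :
    (x + 1) ^ p - x ^ p ≤ p * x ^ (p - 1) := by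
  have hbern : (1 + x⁻¹) ^ p ≤ 1 + p * x⁻¹ :=
    rpow_one_add_le_one_add_mul_self (by linarith [inv_nonneg.2 hx.le]) hp₀ hp₁
  have hsplit : (x + 1) ^ p = x ^ p * (1 + x⁻¹) ^ p := by
    rw [← mul_rpow hx.le (by positivity)]
    congr 1
    field_simp
  calc (x + 1) ^ p - x ^ p = x ^ p * (1 + x⁻¹) ^ p - x ^ p := by rw [hsplit]
    _ ≤ x ^ p * (1 + p * x⁻¹) - x ^ p := by gcongr
    _ = p * x ^ (p - 1) := by rw [rpow_sub_one hx.ne']; ring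

theorem rpow_sub_rpow_le_rpow_sub_rpow_of_exponent_le {x y p q : ℝ} (hx : 0 ≤ x) (hxy : x ≤ y)
    (hy : 1 ≤ y) (hp : 0 < p) (hpq : p ≤ q) : y ^ p - x ^ p ≤ y ^ q - x ^ q := by
  rcases le_or_gt 1 x with hx₁ | hx₁
  · have hsplit : ∀ z : ℝ, 0 < z → z ^ q - z ^ p = z ^ p * (z ^ (q - p) - 1) := fun z hz => by
      rw [mul_sub, mul_one, ← rpow_add hz, add_sub_cancel]
    have hxy' : x ^ p * (x ^ (q - p) - 1) ≤ y ^ p * (y ^ (q - p) - 1) := by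
      have hx_pow : 1 ≤ x ^ (q - p) := one_le_rpow hx₁ (by linarith)
      gcongr
    linarith [hsplit x (by linarith), hsplit y (by linarith)]
  · have hx' : x ^ q ≤ x ^ p := by
      rcases hx.eq_or_lt with rfl | hx₀
      · rw [zero_rpow hp.ne', zero_rpow (by linarith)]
      · exact rpow_le_rpow_of_exponent_ge hx₀ hx₁.le hpq
    linarith [rpow_le_rpow_of_exponent_le hy hpq]

theorem intervalIntegrable_add_one_rpow {p : ℝ} (hp : -1 < p) (a b : ℝ) :
    IntervalIntegrable (fun x : ℝ => (x + 1) ^ p) volume a b := by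
  simpa using
    (intervalIntegral.intervalIntegrable_rpow' (a := a + 1) (b := b + 1) hp).comp_add_right 1

theorem intervalIntegrable_rpow_add_one_sub_rpow {p : ℝ} (hp : -1 < p) (a b : ℝ) :
    IntervalIntegrable (fun x : ℝ => (x + 1) ^ p - x ^ p) volume a b :=
  (intervalIntegrable_add_one_rpow hp a b).sub (intervalIntegral.intervalIntegrable_rpow' hp)

theorem integral_rpow_add_one_sub_rpow_nonneg {a p : ℝ} (ha : 0 ≤ a) (hp : 0 ≤ p) :
    0 ≤ ∫ x in a..a + 1, ((x + 1) ^ p - x ^ p) := by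
  refine intervalIntegral.integral_nonneg (by linarith) fun x hx => ?_
  have : x ^ p ≤ (x + 1) ^ p := rpow_le_rpow (ha.trans hx.1) (by linarith) hp
  linarith

theorem integral_rpow_add_one_sub_rpow_le {a p : ℝ} (ha : 0 < a) (hp₀ : 0 ≤ p) (hp₁ : p ≤ 1) :
    ∫ x in a..a + 1, ((x + 1) ^ p - x ^ p) ≤ p * a ^ (p - 1) := by
  have hbound : ∀ x ∈ Icc a (a + 1), (x + 1) ^ p - x ^ p ≤ p * a ^ (p - 1) := fun x hx =>
    (rpow_add_one_sub_rpow_le (ha.trans_le hx.1) hp₀ hp₁).trans <|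
      mul_le_mul_of_nonneg_left (rpow_le_rpow_of_nonpos ha hx.1 (by linarith)) hp₀
  simpa using intervalIntegral.integral_mono_on (by linarith)
    (intervalIntegrable_rpow_add_one_sub_rpow (by linarith) _ _) intervalIntegrable_const hbound

theorem summable_nat_add_one_rpow {p : ℝ} (hp : p < -1) :
    Summable fun n : ℕ => ((n : ℝ) + 1) ^ p := by
  simpa using (summable_nat_add_iff 1).2 (summable_nat_rpow.2 hp)

theorem tsum_nat_add_one_rpow_neg_le {s : ℝ} (hs : 1 < s) :
    ∑' n : ℕ, ((n : ℝ) + 1) ^ (-s) ≤ s / (s - 1) := by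
  have hrem : 0 ≤ 1 / (s - 1) - 1 / s * ∑' n : ℕ, 1 / ((n : ℝ) + 1) ^ s := by
    rw [← ZetaAsymptotics.termTSum_of_lt hs]
    exact tsum_nonneg fun n => ZetaAsymptotics.term_nonneg _ _
  have hterm : ∀ n : ℕ, 1 / ((n : ℝ) + 1) ^ s = ((n : ℝ) + 1) ^ (-s) := fun n => by
    rw [rpow_neg (by positivity), one_div]
  simp_rw [hterm] at hrem
  rw [le_div_iff₀ (by linarith)]
  rw [sub_nonneg, one_div_mul_eq_div, div_le_div_iff₀ (by linarith) (by linarith)] at hrem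
  linarith

theorem le_rpow_natCast_div_iff {x y : ℝ} (hx : 0 ≤ x) (hy : 0 ≤ y) (m n : ℕ)
    (hn : n ≠ 0) : x ≤ y ^ ((m : ℝ) / n) ↔ x ^ n ≤ y ^ m := by
  rw [div_eq_mul_inv, rpow_mul hy, rpow_natCast,
    le_rpow_inv_iff_of_pos hx (by positivity) (by positivity), rpow_natCast]

theorem rpow_natCast_div_le_iff {x y : ℝ} (hx : 0 ≤ x) (hy : 0 ≤ y) (m n : ℕ)
    (hn : n ≠ 0) : y ^ ((m : ℝ) / n) ≤ x ↔ y ^ m ≤ x ^ n := by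
  rw [div_eq_mul_inv, rpow_mul hy, rpow_natCast,
    rpow_inv_le_iff_of_pos (by positivity) hx (by positivity), rpow_natCast]

end Real

open Real

open intervalIntegral in
theorem rho_succ_eq_integral {h : ℝ} (hh : 0 < h) (k : ℕ) :
    rho h (k + 1) = h * ∫ x in (k : ℝ)..k + 1, ((x + 1) ^ (2 * h - 1) - x ^ (2 * h - 1)) := by
  have hp : -1 < 2 * h - 1 := by linarith
  rw [integral_sub (intervalIntegrable_add_one_rpow hp _ _) (intervalIntegrable_rpow' hp),
    integral_comp_add_right (fun x => x ^ (2 * h - 1)), integral_rpow (Or.inl hp),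
    integral_rpow (Or.inl hp), rho]
  push_cast
  field_simp
  ring_nf

theorem rho_one {h : ℝ} (hh : 0 < h) : rho h 1 = 2 ^ (2 * h - 1) - 1 := by
  rw [rho, rpow_sub_one two_ne_zero]
  norm_num [zero_rpow (by positivity : 2 * h ≠ 0)]
  ring

theorem rho_succ_nonneg {h : ℝ} (hh : 1 / 2 ≤ h) (k : ℕ) : 0 ≤ rho h (k + 1) := by
  rw [rho_succ_eq_integral (by linarith)]
  exact mul_nonneg (by linarith) (integral_rpow_add_one_sub_rpow_nonneg k.cast_nonneg (by linarith))

theorem rho_succ_mono {h₁ h₂ : ℝ} (hh₁ : 1 / 2 < h₁) (h₁₂ : h₁ ≤ h₂) (k : ℕ) :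
    rho h₁ (k + 1) ≤ rho h₂ (k + 1) := by
  have hk : (0 : ℝ) ≤ k := k.cast_nonneg
  rw [rho_succ_eq_integral (by linarith), rho_succ_eq_integral (by linarith)]
  refine mul_le_mul h₁₂ ?_ (integral_rpow_add_one_sub_rpow_nonneg hk (by linarith)) (by linarith)
  refine intervalIntegral.integral_mono_on (by linarith)
    (intervalIntegrable_rpow_add_one_sub_rpow (by linarith) _ _)
    (intervalIntegrable_rpow_add_one_sub_rpow (by linarith) _ _) fun x hx => ?_
  exact rpow_sub_rpow_le_rpow_sub_rpow_of_exponent_le (hk.trans hx.1) (by linarith)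
    (by linarith [hx.1]) (by linarith) (by linarith)

theorem rho_succ_succ_le {h : ℝ} (hh₀ : 1 / 2 ≤ h) (hh₁ : h ≤ 1) (k : ℕ) :
    rho h (k + 2) ≤ h * (2 * h - 1) * ((k : ℝ) + 1) ^ (2 * h - 2) := by
  have hint := integral_rpow_add_one_sub_rpow_le (by positivity : (0 : ℝ) < k + 1)
    (by linarith : 0 ≤ 2 * h - 1) (by linarith)
  rw [show 2 * h - 1 - 1 = 2 * h - 2 by ring] at hint
  rw [rho_succ_eq_integral (by linarith) (k + 1), mul_assoc]
  push_cast
  exact mul_le_mul_of_nonneg_left hint (by linarith)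

theorem rho_one_le {h : ℝ} (hh₀ : 1 / 2 ≤ h) (hh₁ : h ≤ 1) : rho h 1 ≤ 2 * h - 1 := by
  have hbern : (1 + 1 : ℝ) ^ (2 * h - 1) ≤ 1 + (2 * h - 1) * 1 :=
    rpow_one_add_le_one_add_mul_self (by norm_num) (by linarith) (by linarith)
  rw [rho_one (by linarith)]
  norm_num at hbern
  linarith

theorem rho_succ_succ_sq_le {h : ℝ} (hh₀ : 1 / 2 ≤ h) (hh₁ : h ≤ 1) (k : ℕ) :
    rho h (k + 2) ^ 2 ≤ (h * (2 * h - 1)) ^ 2 * ((k : ℝ) + 1) ^ (4 * h - 4) := by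
  calc rho h (k + 2) ^ 2 ≤ (h * (2 * h - 1) * ((k : ℝ) + 1) ^ (2 * h - 2)) ^ 2 :=
        pow_le_pow_left₀ (rho_succ_nonneg hh₀ (k + 1)) (rho_succ_succ_le hh₀ hh₁ k) 2
    _ = (h * (2 * h - 1)) ^ 2 * ((k : ℝ) + 1) ^ (4 * h - 4) := by
        rw [mul_pow, ← rpow_mul_natCast (by positivity)]
        ring_nf

theorem summable_rho_succ_sq {h : ℝ} (hh₀ : 1 / 2 ≤ h) (hh₁ : h < 3 / 4) :
    Summable fun k : ℕ => rho h (k + 1) ^ 2 := by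
  rw [← summable_nat_add_iff 1]
  exact Summable.of_nonneg_of_le (fun _ => sq_nonneg _) (rho_succ_succ_sq_le hh₀ (by linarith))
    ((summable_nat_add_one_rpow (by linarith)).mul_left _)

def rhoSqSum (h : ℝ) : ℝ := ∑' k : ℕ, rho h (k + 1) ^ 2

theorem rhoSqSum_le {h : ℝ} (hh₀ : 1 / 2 ≤ h) (hh₁ : h < 3 / 4) :
    rhoSqSum h ≤ (2 * h - 1) ^ 2 * (1 + h ^ 2 * ((4 - 4 * h) / (3 - 4 * h))) := by
  have hsum := summable_rho_succ_sq hh₀ hh₁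
  have hfirst : rho h 1 ^ 2 ≤ (2 * h - 1) ^ 2 :=
    pow_le_pow_left₀ (rho_succ_nonneg hh₀ 0) (rho_one_le hh₀ (by linarith)) 2
  have htail : ∑' k : ℕ, rho h (k + 2) ^ 2 ≤ (h * (2 * h - 1)) ^ 2 * ((4 - 4 * h) / (3 - 4 * h)) :=
    calc ∑' k : ℕ, rho h (k + 2) ^ 2
        ≤ ∑' k : ℕ, (h * (2 * h - 1)) ^ 2 * ((k : ℝ) + 1) ^ (4 * h - 4) :=
          Summable.tsum_le_tsum (rho_succ_succ_sq_le hh₀ (by linarith))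
            ((summable_nat_add_iff 1).2 hsum)
            ((summable_nat_add_one_rpow (by linarith)).mul_left _)
      _ = (h * (2 * h - 1)) ^ 2 * ∑' k : ℕ, ((k : ℝ) + 1) ^ (-(4 - 4 * h)) := by
          rw [tsum_mul_left, neg_sub]
      _ ≤ (h * (2 * h - 1)) ^ 2 * ((4 - 4 * h) / (4 - 4 * h - 1)) := by
          gcongr
          exact tsum_nat_add_one_rpow_neg_le (by linarith)
      _ = _ := by ring_nf
  calc rhoSqSum h = rho h 1 ^ 2 + ∑' k : ℕ, rho h (k + 2) ^ 2 := hsum.tsum_eq_zero_add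
    _ ≤ (2 * h - 1) ^ 2 + (h * (2 * h - 1)) ^ 2 * ((4 - 4 * h) / (3 - 4 * h)) :=
        add_le_add hfirst htail
    _ = _ := by ring

theorem strictMonoOn_rhoSqSum : StrictMonoOn rhoSqSum (Ioo (1 / 2) (3 / 4)) := by
  intro h₁ hh₁ h₂ hh₂ h₁₂
  refine Summable.tsum_lt_tsum (i := 0)
    (fun k => pow_le_pow_left₀ (rho_succ_nonneg hh₁.1.le k) (rho_succ_mono hh₁.1 h₁₂.le k) 2) ?_
    (summable_rho_succ_sq hh₁.1.le hh₁.2) (summable_rho_succ_sq hh₂.1.le hh₂.2)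
  show rho h₁ 1 ^ 2 < rho h₂ 1 ^ 2
  have hlt : (2 : ℝ) ^ (2 * h₁ - 1) < 2 ^ (2 * h₂ - 1) :=
    rpow_lt_rpow_of_exponent_lt one_lt_two (by linarith)
  have hge : (1 : ℝ) ≤ 2 ^ (2 * h₁ - 1) := one_le_rpow one_le_two (by linarith [hh₁.1])
  rw [rho_one (by linarith [hh₁.1]), rho_one (by linarith [hh₂.1])]
  exact pow_lt_pow_left₀ (by linarith) (by linarith) two_ne_zero

theorem rhoSqSum_three_fifths_lt : rhoSqSum (3 / 5) < 1 / 4 :=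
  (rhoSqSum_le (by norm_num) (by norm_num)).trans_lt (by norm_num)

theorem quarter_lt_rhoSqSum_37_50 : 1 / 4 < rhoSqSum (37 / 50) := by
  have h2l : (2789 / 1000 : ℝ) ≤ 2 ^ ((37 : ℝ) / 25) := by
    exact_mod_cast
      (le_rpow_natCast_div_iff (by norm_num) (by norm_num) 37 25 (by norm_num)).2 (by norm_num)
  have h2u : (2 : ℝ) ^ ((37 : ℝ) / 25) ≤ 279 / 100 := by
    exact_mod_cast
      (rpow_natCast_div_le_iff (by norm_num) (by norm_num) 37 25 (by norm_num)).2 (by norm_num)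
  have h3l : (5083 / 1000 : ℝ) ≤ 3 ^ ((37 : ℝ) / 25) := by
    exact_mod_cast
      (le_rpow_natCast_div_iff (by norm_num) (by norm_num) 37 25 (by norm_num)).2 (by norm_num)
  have h3u : (3 : ℝ) ^ ((37 : ℝ) / 25) ≤ 5084 / 1000 := by
    exact_mod_cast
      (rpow_natCast_div_le_iff (by norm_num) (by norm_num) 37 25 (by norm_num)).2 (by norm_num)
  have h4l : (7781 / 1000 : ℝ) ≤ 4 ^ ((37 : ℝ) / 25) := by
    exact_mod_cast
      (le_rpow_natCast_div_iff (by norm_num) (by norm_num) 37 25 (by norm_num)).2 (by norm_num)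
  have hρ₁ : 3945 / 10000 ≤ rho (37 / 50) 1 := by norm_num [rho]; linarith
  have hρ₂ : 2515 / 10000 ≤ rho (37 / 50) 2 := by norm_num [rho]; linarith
  have hρ₃ : 2 / 10 ≤ rho (37 / 50) 3 := by norm_num [rho]; linarith
  calc (1 / 4 : ℝ) < (3945 / 10000) ^ 2 + (2515 / 10000) ^ 2 + (2 / 10) ^ 2 := by norm_num
    _ ≤ ∑ k ∈ Finset.range 3, rho (37 / 50) (k + 1) ^ 2 := by
        simp only [Finset.sum_range_succ, Finset.sum_range_zero, zero_add]
        gcongr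
    _ ≤ rhoSqSum (37 / 50) :=
        (summable_rho_succ_sq (by norm_num) (by norm_num)).sum_le_tsum _ fun _ _ => sq_nonneg _

/-- Corollary A.5: there exists `h_c ∈ (1/2, 3/4)` such that `∑_{k≥1} ρ_h(k)² < 1/4` for
`h ∈ (1/2, h_c)` and `∑_{k≥1} ρ_h(k)² > 1/4` for `h ∈ (h_c, 3/4)`. -/
theorem statement19 :
    ∃ hc ∈ Set.Ioo (1 / 2 : ℝ) (3 / 4),
      (∀ h ∈ Set.Ioo (1 / 2 : ℝ) hc, (∑' k : ℕ, (rho h (k + 1)) ^ 2) < 1 / 4) ∧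
      (∀ h ∈ Set.Ioo hc (3 / 4 : ℝ), (1 / 4 : ℝ) < ∑' k : ℕ, (rho h (k + 1)) ^ 2) :=
  strictMonoOn_rhoSqSum.exists_threshold (x₀ := 3 / 5) (x₁ := 37 / 50)
    ⟨by norm_num, by norm_num⟩ ⟨by norm_num, by norm_num⟩
    rhoSqSum_three_fifths_lt quarter_lt_rhoSqSum_37_50

end
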